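/- For every integer n > 0, the sum over all weakly decreasing tuples (λ₁, λ₂, ..., λₙ) of nonnegative integers with λ₁ + λ₂ + ... + λₙ = n of the rational quantity (−1)^(1+λ₁) · C(λ₁,λ₂)·C(λ₂,λ₃)···C(λₙ,0) · ∏_{i=1}^{n} ((2i−1)/i)^{λᵢ} equals |2n−3|!!/n!, where |2n−3|!! is the double factorial of |2n−3| (so the right-hand side is 1 for n = 1 and (2n−3)!!/n! for n ≥ 2). -/

import Mathlib

/-!
Splitting off the first part `λ₁ = a` shows that the sum of
`C(k, λ₁) ∏ C(λᵢ, λᵢ₊₁) ∏ vᵢ ^ λᵢ` over the `r`-tuples of size `m` is the coefficient of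
`X ^ m` in `H ^ k`, where `H = 1 + v₀ X (1 + v₁ X (1 + ⋯))` is the series
`∑_d v₀ ⋯ v_{d-1} X ^ d` truncated at degree `r`. Replacing `C(k, a)` by `(-1) ^ a` turns the
sum of the theorem into `-[Xⁿ]` of the geometric series `∑ (1 - H) ^ a`, that is `-[Xⁿ] H⁻¹`.
For `vᵢ = (2i+1)/(i+1)` the untruncated series is `A = ∑ (2d-1)!!/d! X ^ d = (1 - 2X) ^ (-1/2)`,
as the differential equation `(1 - 2X) A' = A` shows; hence `H⁻¹ ≡ A (1 - 2X)` modulo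
`X ^ (n+1)`, and `[Xⁿ] A (1 - 2X) = -(2n-3)!!/n!`.
-/

open Finset PowerSeries

def partitionTuples (n : ℕ) : Finset (Fin n → ℕ) :=
  (Finset.Nat.antidiagonalTuple n n).filter fun t => ∀ i j : Fin n, i ≤ j → t j ≤ t i

def binomProd (n : ℕ) (t : Fin n → ℕ) : ℕ :=
  ∏ i : Fin n, Nat.choose (t i) (if h : (i : ℕ) + 1 < n then t ⟨(i : ℕ) + 1, h⟩ else 0)

theorem Finset.Nat.sum_antidiagonalTuple_succ {M : Type*} [AddCommMonoid M] (k n : ℕ)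
    (f : (Fin (k + 1) → ℕ) → M) :
    ∑ t ∈ antidiagonalTuple (k + 1) n, f t =
      ∑ p ∈ antidiagonal n, ∑ t ∈ antidiagonalTuple k p.2, f (Fin.cons p.1 t) := by
  have h : (antidiagonalTuple (k + 1) n).val =
      (antidiagonal n).val.bind fun p => (antidiagonalTuple k p.2).val.map (Fin.cons p.1) := by
    simp only [antidiagonalTuple, Multiset.Nat.antidiagonalTuple, List.Nat.antidiagonalTuple]
    rw [← Multiset.coe_bind]
    rfl
  simp only [Finset.sum, h, Multiset.map_bind, Multiset.sum_bind, Multiset.map_map]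
  rfl

def tupleHead : {r : ℕ} → (Fin r → ℕ) → ℕ
  | 0, _ => 0
  | _ + 1, t => t 0

lemma binomProd_cons {r : ℕ} (a : ℕ) (t : Fin r → ℕ) :
    binomProd (r + 1) (Fin.cons a t) = a.choose (tupleHead t) * binomProd r t := by
  rw [binomProd, binomProd, Fin.prod_univ_succ]
  congr 1
  · cases r <;> rfl
  · refine prod_congr rfl fun i _ => ?_
    simp only [Fin.val_succ, Fin.cons_succ]
    split_ifs <;> first | rfl | omega

lemma antitone_of_binomProd_ne_zero {n : ℕ} {t : Fin n → ℕ} (h : binomProd n t ≠ 0) :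
    Antitone t := by
  cases n with
  | zero => exact fun i => i.elim0
  | succ n =>
    refine Fin.antitone_iff_succ_le.2 fun i => ?_
    have hi := prod_ne_zero_iff.1 h i.castSucc (mem_univ _)
    rwa [Fin.val_castSucc, dif_pos (by omega), Ne, Nat.choose_eq_zero_iff, not_lt] at hi

lemma sum_partitionTuples_eq_sum_antidiagonalTuple {M : Type*} [AddCommMonoid M] {n : ℕ}
    (f : (Fin n → ℕ) → M) (hf : ∀ t, binomProd n t = 0 → f t = 0) :
    ∑ t ∈ partitionTuples n, f t = ∑ t ∈ Nat.antidiagonalTuple n n, f t :=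
  sum_filter_of_ne fun t _ h => antitone_of_binomProd_ne_zero (mt (hf t) h)

section CommSemiring

variable {R : Type*} [CommSemiring R]

noncomputable def prodSeries (v : ℕ → R) : R⟦X⟧ := mk fun d => ∏ i ∈ range d, v i

noncomputable def hornerSeries : ℕ → (ℕ → R) → R⟦X⟧
  | 0, _ => 1
  | r + 1, v => 1 + C (v 0) * X * hornerSeries r (fun i => v (i + 1))

lemma coeff_hornerSeries (r : ℕ) (v : ℕ → R) (d : ℕ) :
    coeff d (hornerSeries r v) = if d ≤ r then ∏ i ∈ range d, v i else 0 := by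
  induction r generalizing v d with
  | zero => cases d <;> simp [hornerSeries, coeff_one]
  | succ r ih =>
    cases d with
    | zero => simp [hornerSeries]
    | succ d => simp [hornerSeries, mul_assoc, coeff_succ_X_mul, ih, prod_range_succ', mul_comm]

lemma coeff_one_add_C_mul_X_mul_pow (c : R) (g : R⟦X⟧) (k m : ℕ) :
    coeff m ((1 + C c * X * g) ^ k) =
      ∑ p ∈ antidiagonal m, (k.choose p.1 : R) * c ^ p.1 * coeff p.2 (g ^ p.1) := by
  set u : ℕ → R := fun a => k.choose a * c ^ a * if a ≤ m then coeff (m - a) (g ^ a) else 0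
  have hu : ∀ a ≥ min k m + 1, u a = 0 := fun a ha => by
    rcases le_or_gt a m with ham | ham
    · simp [u, Nat.choose_eq_zero_of_lt (by omega : k < a)]
    · simp [u, Nat.not_le.2 ham]
  calc coeff m ((1 + C c * X * g) ^ k) = ∑ a ∈ range (k + 1), u a := by
        rw [add_comm, add_pow, map_sum]
        refine sum_congr rfl fun a _ => ?_
        have hterm : (C c * X * g) ^ a * 1 ^ (k - a) * (k.choose a : R⟦X⟧) =
            C (k.choose a * c ^ a) * (g ^ a * X ^ a) := by
          rw [map_mul, map_pow, map_natCast]; ring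
        rw [hterm, coeff_C_mul, coeff_mul_X_pow']
    _ = ∑ a ∈ range (m + 1), u a := by
        rw [eventually_constant_sum hu (n := k + 1) (by omega),
          eventually_constant_sum hu (n := m + 1) (by omega)]
    _ = _ := by
        rw [Nat.sum_antidiagonal_eq_sum_range_succ_mk]
        exact sum_congr rfl fun a ha => by simp [u, Nat.lt_succ_iff.1 (mem_range.1 ha)]

lemma sum_antidiagonalTuple_succ_mul_binomProd (F : ℕ → R) (v : ℕ → R) (r m : ℕ) :
    ∑ t ∈ Nat.antidiagonalTuple (r + 1) m,
        F (tupleHead t) * binomProd (r + 1) t * ∏ i : Fin (r + 1), v i ^ t i =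
      ∑ p ∈ antidiagonal m, F p.1 * v 0 ^ p.1 *
        ∑ t ∈ Nat.antidiagonalTuple r p.2,
          (p.1.choose (tupleHead t) : R) * binomProd r t * ∏ i : Fin r, v (i + 1) ^ t i := by
  rw [Nat.sum_antidiagonalTuple_succ]
  refine sum_congr rfl fun p _ => ?_
  rw [mul_sum]
  refine sum_congr rfl fun t _ => ?_
  rw [binomProd_cons, Fin.prod_univ_succ]
  simp only [tupleHead, Fin.cons_zero, Fin.cons_succ, Fin.val_zero, Fin.val_succ, Nat.cast_mul]
  ring

theorem sum_antidiagonalTuple_choose_mul_binomProd (v : ℕ → R) (r k m : ℕ) :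
    ∑ t ∈ Nat.antidiagonalTuple r m,
        (k.choose (tupleHead t) : R) * binomProd r t * ∏ i : Fin r, v i ^ t i =
      coeff m (hornerSeries r v ^ k) := by
  induction r generalizing v k m with
  | zero => cases m <;> simp [tupleHead, binomProd, hornerSeries, coeff_one]
  | succ r ih =>
    rw [sum_antidiagonalTuple_succ_mul_binomProd (fun a => (k.choose a : R)), hornerSeries,
      coeff_one_add_C_mul_X_mul_pow]
    exact sum_congr rfl fun p _ => by rw [← ih]

end CommSemiring

section CommRing

variable {R : Type*} [CommRing R]

lemma X_pow_dvd_prodSeries_sub_hornerSeries (r : ℕ) (v : ℕ → R) :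
    X ^ (r + 1) ∣ prodSeries v - hornerSeries r v := by
  refine X_pow_dvd_iff.2 fun d hd => ?_
  rw [map_sub, coeff_hornerSeries, if_pos (by omega), prodSeries, coeff_mk, sub_self]

lemma X_pow_dvd_geom_sum_neg_sub {Y G : R⟦X⟧} {n : ℕ} (hY : X ∣ Y)
    (hG : X ^ n ∣ (1 + Y) * G - 1) : X ^ n ∣ ∑ a ∈ range n, (-Y) ^ a - G := by
  have geom : (∑ a ∈ range n, (-Y) ^ a) * (1 + Y) = 1 - (-Y) ^ n := by
    simpa using geom_sum_mul_neg (-Y) n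
  have key : ∑ a ∈ range n, (-Y) ^ a - G =
      -(∑ a ∈ range n, (-Y) ^ a) * ((1 + Y) * G - 1) - G * (-Y) ^ n := by
    linear_combination G * geom
  rw [key]
  exact dvd_sub (dvd_mul_of_dvd_right hG _)
    (dvd_mul_of_dvd_right (pow_dvd_pow_of_dvd (dvd_neg.2 hY) n) _)

lemma coeff_succ_mul_one_sub_two_mul_X (f : R⟦X⟧) (m : ℕ) :
    coeff (m + 1) (f * (1 - 2 * X)) = coeff (m + 1) f - 2 * coeff m f := by
  rw [mul_sub, mul_one, map_sub, ← map_ofNat C 2, mul_comm (C 2), ← mul_assoc, coeff_mul_C,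
    coeff_succ_mul_X, mul_comm]

lemma sum_antidiagonalTuple_neg_one_pow_mul_binomProd (v : ℕ → R) (hv : v 0 = 1) (r m : ℕ) :
    ∑ t ∈ Nat.antidiagonalTuple (r + 1) m,
        (-1) ^ (1 + tupleHead t) * binomProd (r + 1) t * ∏ i : Fin (r + 1), v i ^ t i =
      -coeff m (∑ a ∈ range (m + 1), (-(X * hornerSeries r fun i => v (i + 1))) ^ a) := by
  rw [sum_antidiagonalTuple_succ_mul_binomProd (fun a => (-1 : R) ^ (1 + a)), map_sum,
    ← sum_neg_distrib, Nat.sum_antidiagonal_eq_sum_range_succ_mk]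
  refine sum_congr rfl fun a ha => ?_
  have hpow : (-(X * hornerSeries r fun i => v (i + 1))) ^ a =
      C ((-1) ^ a) * ((hornerSeries r fun i => v (i + 1)) ^ a * X ^ a) := by
    rw [map_pow, map_neg, map_one]; ring
  rw [sum_antidiagonalTuple_choose_mul_binomProd (fun i => v (i + 1)), hv, hpow, coeff_C_mul,
    coeff_mul_X_pow', if_pos (Nat.lt_succ_iff.1 (mem_range.1 ha))]
  ring

end CommRing

/-- The paper's weight `(2i - 1)/i`, indexed from `0`. -/
def weight (i : ℕ) : ℚ := (2 * i + 1) / (i + 1)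

lemma succ_mul_prod_weight (d : ℕ) :
    (d + 1 : ℚ) * ∏ i ∈ range (d + 1), weight i =
      (2 * d + 1) * ∏ i ∈ range d, weight i := by
  rw [prod_range_succ, weight]
  field_simp

lemma prod_weight_mul_factorial (d : ℕ) :
    (∏ i ∈ range d, weight i) * d.factorial = (2 * d - 1).doubleFactorial := by
  induction d with
  | zero => simp
  | succ d ih =>
    rw [show 2 * (d + 1) - 1 = 2 * d + 1 by omega, Nat.doubleFactorial_add_one,
      Nat.factorial_succ]
    push_cast
    linear_combination (d.factorial : ℚ) * succ_mul_prod_weight d + (2 * d + 1) * ih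

lemma derivative_prodSeries_weight_mul :
    d⁄dX ℚ (prodSeries weight) * (1 - 2 * X) = prodSeries weight := by
  ext m
  cases m with
  | zero =>
    rw [mul_sub, mul_one, map_sub, ← mul_assoc, coeff_zero_mul_X, sub_zero, coeff_derivative]
    simp [prodSeries, weight]
  | succ m =>
    rw [coeff_succ_mul_one_sub_two_mul_X, coeff_derivative, coeff_derivative, prodSeries,
      coeff_mk, coeff_mk]
    have h := succ_mul_prod_weight (m + 1)
    push_cast at h ⊢
    linear_combination h

lemma prodSeries_weight_sq_mul : prodSeries weight ^ 2 * (1 - 2 * X) = 1 := by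
  apply derivative.ext
  · have h2 : d⁄dX ℚ (2 : ℚ⟦X⟧) = 0 := by rw [← map_ofNat C 2, derivative_C]
    simp only [Derivation.leibniz, derivative_pow, map_sub, derivative_one, h2,
      derivative_X, smul_eq_mul]
    linear_combination 2 * prodSeries weight * derivative_prodSeries_weight_mul
  · simp [prodSeries]

lemma coeff_succ_prodSeries_weight_mul (r : ℕ) :
    coeff (r + 1) (prodSeries weight * (1 - 2 * X)) =
      -((2 * r - 1).doubleFactorial / (r + 1).factorial : ℚ) := by
  rw [coeff_succ_mul_one_sub_two_mul_X, prodSeries, coeff_mk, coeff_mk,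
    ← prod_weight_mul_factorial, Nat.factorial_succ]
  field_simp
  push_cast
  linear_combination (r.factorial : ℚ) * succ_mul_prod_weight r

lemma coeff_geom_sum_hornerSeries_weight (r : ℕ) :
    coeff (r + 1) (∑ a ∈ range (r + 2), (-(X * hornerSeries r fun i => weight (i + 1))) ^ a) =
      coeff (r + 1) (prodSeries weight * (1 - 2 * X)) := by
  set A := prodSeries weight
  set H := 1 + X * hornerSeries r fun i => weight (i + 1)
  have hH : H = hornerSeries (r + 1) weight := by simp [H, hornerSeries, weight]
  have hinv : X ^ (r + 2) ∣ H * (A * (1 - 2 * X)) - 1 := by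
    have hsplit : H * (A * (1 - 2 * X)) - 1 = -((A - H) * (A * (1 - 2 * X))) := by
      linear_combination prodSeries_weight_sq_mul
    rw [hsplit, dvd_neg, hH]
    exact dvd_mul_of_dvd_left (X_pow_dvd_prodSeries_sub_hornerSeries (r + 1) weight) _
  have hcoeff := X_pow_dvd_iff.1 (X_pow_dvd_geom_sum_neg_sub (dvd_mul_right X _) hinv) (r + 1)
    (by omega)
  rwa [map_sub, sub_eq_zero] at hcoeff

theorem stmt12 (n : ℕ) (hn : 0 < n) :
    ∑ t ∈ partitionTuples n,
      (-1 : ℚ) ^ (1 + t ⟨0, hn⟩) * (binomProd n t : ℚ) *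
        ∏ i : Fin n, ((2 * ((i : ℕ) + 1) - 1 : ℚ) / ((i : ℕ) + 1 : ℚ)) ^ (t i)
      = (Nat.doubleFactorial (2 * (n : ℤ) - 3).natAbs : ℚ) / (Nat.factorial n : ℚ) := by
  obtain ⟨r, rfl⟩ := Nat.exists_eq_add_one_of_ne_zero hn.ne'
  have hhead (t : Fin (r + 1) → ℕ) : t ⟨0, hn⟩ = tupleHead t := rfl
  have hweight (i : Fin (r + 1)) :
      (2 * ((i : ℕ) + 1) - 1 : ℚ) / ((i : ℕ) + 1 : ℚ) = weight i := by
    rw [weight]; ring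
  have habs :
      (2 * ((r + 1 : ℕ) : ℤ) - 3).natAbs.doubleFactorial = (2 * r - 1).doubleFactorial := by
    rcases r with _ | r
    · rfl
    · congr 1; omega
  simp only [hhead, hweight]
  rw [sum_partitionTuples_eq_sum_antidiagonalTuple _ fun t ht => by simp [ht],
    sum_antidiagonalTuple_neg_one_pow_mul_binomProd weight (by simp [weight]),
    coeff_geom_sum_hornerSeries_weight, coeff_succ_prodSeries_weight_mul, habs, neg_neg]
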